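/- The positive integers n satisfying 0 ≤ δ(n) < 1 are precisely those of at least one of the following forms, with the stated complexities: (1) n = 3^k with k ≥ 1, and ‖n‖ = 3k; (2) n = 2^a·3^k with 0 ≤ a ≤ 9 and a + k ≥ 1, and ‖n‖ = 2a + 3k; (3) n = 5·2^a·3^k with 0 ≤ a ≤ 3, and ‖n‖ = 5 + 2a + 3k; (4) n = 7·2^a·3^k with 0 ≤ a ≤ 2, and ‖n‖ = 6 + 2a + 3k; (5) n = 19·3^k, and ‖n‖ = 9 + 3k; (6) n = 13·3^k, and ‖n‖ = 8 + 3k; (7) n = (3^m + 1)·3^k with m ≥ 1, and ‖n‖ = 1 + 3m + 3k. Furthermore, n = 1 is the only positive integer with δ(n) = 1. -/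

import Mathlib

open Real

/-- `Writes n k` means the positive integer `n` can be written using exactly `k` ones
combined by additions and multiplications. -/
inductive Writes : ℕ → ℕ → Prop
  | one : Writes 1 1
  | add {a b m n : ℕ} : Writes a m → Writes b n → Writes (a + b) (m + n)
  | mul {a b m n : ℕ} : Writes a m → Writes b n → Writes (a * b) (m + n)

/-- The integer complexity `‖n‖`: the least number of 1's needed to write `n`
using additions and multiplications. -/
noncomputable def cpx (n : ℕ) : ℕ := sInf {k | Writes n k}

/-- The defect `δ(n) = ‖n‖ - 3 log₃ n`. -/
noncomputable def defect (n : ℕ) : ℝ := (cpx n : ℝ) - 3 * Real.logb 3 n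
/-!
A representation of `n` with `k` ones has defect `k - 3 log₃ n`; comparisons of it with
constants become integer inequalities: defect `≥ 0` is `n ^ 3 ≤ 3 ^ k`, defect `< 1` is
`3 ^ k < 3 * n ^ 3`, and defect `≥ 1/2` ("half") is `3 * n ^ 6 ≤ 9 ^ k`.

Defects add under multiplication, and a sum of representations `(a, p)`, `(b, q)` with
`q ≤ p` and `a + b ≥ 10` has defect `≥ 1` unless `b = 1` is written with a single one.
So by induction on a representation of defect `< 1`, `n = c * 2 ^ A * 3 ^ J` with
`k = κ + 2A + 3J` for one of the leaders `(c, κ)` = `(1, 0), (5, 5), (7, 6), (13, 8), (19, 9),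
(3 ^ m + 1, 3m + 1)`. Every leader other than `1` has defect `≥ 1/2`, so no two of them can be
multiplied, and adding `1` to such a number (at least `9`) pushes the defect past `1`; adding
`1` to `2 ^ A * 3 ^ J` gives a leader or again defect `≥ 1`. For each leader the defect grows
with `A`, which bounds `A`.

Defect exactly `1` means `3 * n ^ 3 = 3 ^ ‖n‖`, so `n = 3 ^ j` with `‖n‖ = 3j + 1`, while
`‖3 ^ j‖ ≤ 3j` for `j ≥ 1`.
-/

theorem Writes.pos {n k : ℕ} (h : Writes n k) : 0 < n ∧ 0 < k := by
  induction h with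
  | one => exact ⟨one_pos, one_pos⟩
  | add _ _ iha ihb => omega
  | mul _ _ iha ihb => exact ⟨Nat.mul_pos iha.1 ihb.1, by omega⟩

lemma succ_cube_le_three_mul_cube {x : ℕ} (hx : 3 ≤ x) : (x + 1) ^ 3 ≤ 3 * x ^ 3 := by
  nlinarith [sq_nonneg x]

lemma succ_cube_le_three_pow_succ {a p : ℕ} (hp : 0 < p) (hap : a ^ 3 ≤ 3 ^ p) :
    (a + 1) ^ 3 ≤ 3 ^ (p + 1) := by
  rw [pow_succ 3 p]
  rcases le_or_gt 3 a with ha | ha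
  · linarith [succ_cube_le_three_mul_cube ha]
  have h3 : 3 ≤ 3 ^ p := by simpa using Nat.pow_le_pow_right (show 0 < 3 by norm_num) hp
  interval_cases a
  · omega
  · omega
  · have hp2 : 2 ≤ p := by
      by_contra! hp2
      interval_cases p
      norm_num at hap
    have := Nat.pow_le_pow_right (show 0 < 3 by norm_num) hp2
    omega

lemma add_cube_le_three_pow_add {a b p q : ℕ} (ha : 0 < a) (hb : 0 < b) (hp : 0 < p) (hq : 0 < q)
    (hap : a ^ 3 ≤ 3 ^ p) (hbq : b ^ 3 ≤ 3 ^ q) : (a + b) ^ 3 ≤ 3 ^ (p + q) := by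
  rcases Nat.lt_or_ge b 2 with hb1 | hb2
  · obtain rfl : b = 1 := by omega
    exact (succ_cube_le_three_pow_succ hp hap).trans (Nat.pow_le_pow_right (by norm_num) (by omega))
  rcases Nat.lt_or_ge a 2 with ha1 | ha2
  · obtain rfl : a = 1 := by omega
    rw [add_comm, add_comm p]
    exact (succ_cube_le_three_pow_succ hq hbq).trans (Nat.pow_le_pow_right (by norm_num) (by omega))
  calc (a + b) ^ 3 ≤ (a * b) ^ 3 := Nat.pow_le_pow_left (by nlinarith) 3
    _ = a ^ 3 * b ^ 3 := mul_pow a b 3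
    _ ≤ 3 ^ p * 3 ^ q := Nat.mul_le_mul hap hbq
    _ = 3 ^ (p + q) := (pow_add 3 p q).symm

theorem Writes.cube_le {n k : ℕ} (h : Writes n k) : n ^ 3 ≤ 3 ^ k := by
  induction h with
  | one => norm_num
  | add ha hb iha ihb => exact add_cube_le_three_pow_add ha.pos.1 hb.pos.1 ha.pos.2 hb.pos.2 iha ihb
  | mul _ _ iha ihb => rw [mul_pow, pow_add]; exact Nat.mul_le_mul iha ihb

lemma writes_self {n : ℕ} (hn : 0 < n) : Writes n n := by
  induction n, hn using Nat.le_induction with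
  | base => exact Writes.one
  | succ n _ ih => exact ih.add Writes.one

lemma writes_cpx {n : ℕ} (hn : 0 < n) : Writes n (cpx n) := Nat.sInf_mem ⟨n, writes_self hn⟩

lemma cpx_le {n k : ℕ} (h : Writes n k) : cpx n ≤ k := Nat.sInf_le h

lemma cpx_one : cpx 1 = 1 := le_antisymm (cpx_le Writes.one) (writes_cpx one_pos).pos.2

lemma writes_three : Writes 3 3 := (Writes.one.add Writes.one).add Writes.one

lemma writes_three_pow {j : ℕ} (hj : 0 < j) : Writes (3 ^ j) (3 * j) := by
  induction j, hj using Nat.le_induction with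
  | base => exact writes_three
  | succ j _ ih => simpa [pow_succ, mul_add] using ih.mul writes_three

lemma logb_three_mul_cube {n : ℕ} (hn : 0 < n) :
    logb 3 ((3 * n ^ 3 : ℕ) : ℝ) = 1 + 3 * logb 3 n := by
  push_cast
  rw [logb_mul (by norm_num) (pow_ne_zero _ (Nat.cast_ne_zero.2 hn.ne')),
    logb_self_eq_one (by norm_num), logb_pow, Nat.cast_ofNat]

lemma defect_lt_one_iff {n : ℕ} (hn : 0 < n) : defect n < 1 ↔ 3 ^ cpx n < 3 * n ^ 3 := by
  have h : defect n < 1 ↔ (cpx n : ℝ) < logb 3 ((3 * n ^ 3 : ℕ) : ℝ) := by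
    rw [logb_three_mul_cube hn, defect]
    constructor <;> intro h <;> linarith
  rw [h, lt_logb_iff_rpow_lt (by norm_num) (by positivity), rpow_natCast]
  exact_mod_cast Iff.rfl

lemma defect_eq_one_iff {n : ℕ} (hn : 0 < n) : defect n = 1 ↔ 3 ^ cpx n = 3 * n ^ 3 := by
  have h : defect n = 1 ↔ logb 3 ((3 * n ^ 3 : ℕ) : ℝ) = cpx n := by
    rw [logb_three_mul_cube hn, defect]
    constructor <;> intro h <;> linarith
  rw [h, logb_eq_iff_rpow_eq (by norm_num) (by norm_num) (by positivity), rpow_natCast]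
  exact_mod_cast Iff.rfl

lemma eq_one_of_three_pow_cpx_eq {n : ℕ} (hn : 0 < n) (h : 3 ^ cpx n = 3 * n ^ 3) : n = 1 := by
  obtain ⟨t, ht⟩ := Nat.exists_eq_add_one.2 (writes_cpx hn).pos.2
  have hcube : n ^ 3 = 3 ^ t := by rw [ht, pow_succ] at h; omega
  obtain ⟨j, -, rfl⟩ :=
    (Nat.dvd_prime_pow Nat.prime_three).1 (hcube ▸ dvd_pow_self n three_ne_zero)
  have htj : j * 3 = t := Nat.pow_right_injective le_rfl (by simpa [← pow_mul] using hcube)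
  rcases j.eq_zero_or_pos with rfl | hj
  · rfl
  · have := cpx_le (writes_three_pow hj)
    omega

lemma pow_add_two_mul_add_three_mul (b κ A J : ℕ) :
    b ^ (κ + 2 * A + 3 * J) = b ^ κ * (b ^ 2) ^ A * (b ^ 3) ^ J := by
  rw [pow_add, pow_add, pow_mul, pow_mul]

lemma mul_two_pow_mul_three_pow_pow (x A J e : ℕ) :
    (x * 2 ^ A * 3 ^ J) ^ e = x ^ e * (2 ^ e) ^ A * (3 ^ e) ^ J := by
  rw [mul_pow, mul_pow, ← pow_mul, ← pow_mul, pow_mul', pow_mul']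

lemma mul_pow_le_pow_add {r x k e b : ℕ} (h₂ : 2 ^ e ≤ b ^ 2) (h₃ : 3 ^ e ≤ b ^ 3)
    (h : r * x ^ e ≤ b ^ k) (A J : ℕ) :
    r * (x * 2 ^ A * 3 ^ J) ^ e ≤ b ^ (k + 2 * A + 3 * J) := by
  rw [mul_two_pow_mul_three_pow_pow, pow_add_two_mul_add_three_mul, ← mul_assoc, ← mul_assoc]
  gcongr

lemma not_three_pow_lt_succ_cube {x k n m : ℕ} (h : (x + 1) ^ 3 ≤ 3 ^ k) (A J : ℕ)
    (hn : n = x * 2 ^ A * 3 ^ J) (hm : m = k + 2 * A + 3 * J) : ¬ 3 ^ m < (n + 1) ^ 3 := by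
  have hle : n + 1 ≤ (x + 1) * 2 ^ A * 3 ^ J := by
    have : 1 ≤ 2 ^ A * 3 ^ J := Nat.one_le_iff_ne_zero.2 (by positivity)
    rw [hn]; nlinarith
  have := mul_pow_le_pow_add (r := 1) (x := x + 1) (e := 3) (b := 3) (by norm_num) (by norm_num)
    (by simpa using h) A J
  rw [one_mul, ← hm] at this
  exact not_lt.2 ((Nat.pow_le_pow_left hle 3).trans this)

lemma three_pow_add_lt {x k : ℕ} (h : 3 ^ k < 3 * x ^ 3) (J : ℕ) :
    3 ^ (k + 3 * J) < 3 * (x * 3 ^ J) ^ 3 := by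
  have e₁ : 3 ^ (k + 3 * J) = 3 ^ k * 27 ^ J := by rw [pow_add, pow_mul]; norm_num
  have e₂ : (x * 3 ^ J) ^ 3 = x ^ 3 * 27 ^ J := by
    rw [mul_pow, ← pow_mul, mul_comm J, pow_mul]; norm_num
  rw [e₁, e₂, ← mul_assoc]
  exact Nat.mul_lt_mul_of_pos_right h (by positivity)

lemma three_pow_lt_of_mul {a b p q : ℕ} (h : 3 ^ (p + q) < 3 * (a * b) ^ 3)
    (hb : b ^ 3 ≤ 3 ^ q) : 3 ^ p < 3 * a ^ 3 := by
  rw [pow_add, mul_pow, ← mul_assoc] at h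
  exact Nat.lt_of_mul_lt_mul_right (h.trans_le (Nat.mul_le_mul_left _ hb))

lemma nine_pow (k : ℕ) : 9 ^ k = (3 ^ k) ^ 2 := by
  rw [← pow_mul, mul_comm, pow_mul]; norm_num

lemma succ_pow_six_le {x : ℕ} (hx : 9 ≤ x) : (x + 1) ^ 6 ≤ 3 * x ^ 6 := by
  have h : 2 * (x + 1) ^ 3 ≤ 3 * x ^ 3 := by nlinarith [sq_nonneg x]
  nlinarith [Nat.pow_le_pow_left h 2]

lemma succ_cube_le_of_half {a p : ℕ} (ha : 9 ≤ a) (h : 3 * a ^ 6 ≤ 9 ^ p) :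
    (a + 1) ^ 3 ≤ 3 ^ p := by
  refine (Nat.pow_le_pow_iff_left two_ne_zero).1 ?_
  calc ((a + 1) ^ 3) ^ 2 = (a + 1) ^ 6 := by ring
    _ ≤ 3 * a ^ 6 := succ_pow_six_le ha
    _ ≤ (3 ^ p) ^ 2 := nine_pow p ▸ h

lemma three_mul_cube_le_of_half {a b p q : ℕ} (ha : 3 * a ^ 6 ≤ 9 ^ p)
    (hb : 3 * b ^ 6 ≤ 9 ^ q) : 3 * (a * b) ^ 3 ≤ 3 ^ (p + q) := by
  refine (Nat.pow_le_pow_iff_left two_ne_zero).1 ?_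
  calc (3 * (a * b) ^ 3) ^ 2 = (3 * a ^ 6) * (3 * b ^ 6) := by ring
    _ ≤ 9 ^ p * 9 ^ q := Nat.mul_le_mul ha hb
    _ = (3 ^ (p + q)) ^ 2 := by rw [← pow_add, nine_pow]

lemma three_mul_three_pow_add_one_pow_six_le {m : ℕ} (hm : 2 ≤ m) :
    3 * (3 ^ m + 1) ^ 6 ≤ 9 ^ (3 * m + 1) := by
  have h9 : 9 ≤ 3 ^ m := by simpa using Nat.pow_le_pow_right (show 0 < 3 by norm_num) hm
  calc 3 * (3 ^ m + 1) ^ 6 ≤ 3 * (3 * (3 ^ m) ^ 6) := Nat.mul_le_mul_left 3 (succ_pow_six_le h9)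
    _ = 9 ^ (3 * m + 1) := by rw [nine_pow]; ring

lemma three_mul_cube_three_pow_add_one_mul_two_le {m : ℕ} (hm : 3 ≤ m) :
    3 * ((3 ^ m + 1) * 2 ^ 1) ^ 3 ≤ 3 ^ (3 * m + 1 + 2 * 1) := by
  have h27 : 27 ≤ 3 ^ m := by simpa using Nat.pow_le_pow_right (show 0 < 3 by norm_num) hm
  have h : 8 * (3 ^ m + 1) ^ 3 ≤ 9 * (3 ^ m) ^ 3 := by
    generalize 3 ^ m = x at h27 ⊢
    nlinarith [sq_nonneg x]
  calc 3 * ((3 ^ m + 1) * 2 ^ 1) ^ 3 = 3 * (8 * (3 ^ m + 1) ^ 3) := by ring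
    _ ≤ 3 * (9 * (3 ^ m) ^ 3) := Nat.mul_le_mul_left 3 h
    _ = 3 ^ (3 * m + 1 + 2 * 1) := by ring

-- `κ` is the complexity of the leader `c`.
inductive Leader : ℕ → ℕ → Prop
  | one : Leader 1 0
  | five : Leader 5 5
  | seven : Leader 7 6
  | thirteen : Leader 13 8
  | nineteen : Leader 19 9
  | three_pow_add_one {m : ℕ} : 2 ≤ m → Leader (3 ^ m + 1) (3 * m + 1)

def LeaderForm (n k : ℕ) : Prop :=
  ∃ c κ A J, Leader c κ ∧ n = c * 2 ^ A * 3 ^ J ∧ k = κ + 2 * A + 3 * J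

lemma Leader.leaderForm {c κ : ℕ} (h : Leader c κ) : LeaderForm c κ :=
  ⟨c, κ, 0, 0, h, by ring, by ring⟩

lemma LeaderForm.two_pow_mul_three_pow (A J : ℕ) : LeaderForm (2 ^ A * 3 ^ J) (2 * A + 3 * J) :=
  ⟨1, 0, A, J, .one, by ring, by ring⟩

lemma LeaderForm.two_pow_mul_three_pow_mul {b q : ℕ} (h : LeaderForm b q) (A J : ℕ) :
    LeaderForm (2 ^ A * 3 ^ J * b) (2 * A + 3 * J + q) := by
  obtain ⟨c, κ, A', J', hc, rfl, rfl⟩ := h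
  exact ⟨c, κ, A + A', J + J', hc, by ring, by ring⟩

lemma Leader.eq_one_or_three_mul_pow_six_le {c κ : ℕ} (h : Leader c κ) :
    c = 1 ∧ κ = 0 ∨ 3 * c ^ 6 ≤ 9 ^ κ := by
  cases h with
  | one => exact .inl ⟨rfl, rfl⟩
  | three_pow_add_one hm => exact .inr (three_mul_three_pow_add_one_pow_six_le hm)
  | _ => right; norm_num

lemma LeaderForm.smooth_or_half {n k : ℕ} (h : LeaderForm n k) :
    (∃ A J, n = 2 ^ A * 3 ^ J ∧ k = 2 * A + 3 * J) ∨ 3 * n ^ 6 ≤ 9 ^ k := by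
  obtain ⟨c, κ, A, J, hc, rfl, rfl⟩ := h
  rcases hc.eq_one_or_three_mul_pow_six_le with ⟨rfl, rfl⟩ | hhalf
  · exact .inl ⟨A, J, by ring, by ring⟩
  · exact .inr (mul_pow_le_pow_add (by norm_num) (by norm_num) hhalf A J)

lemma LeaderForm.mul {a b p q : ℕ} (ha : LeaderForm a p) (hb : LeaderForm b q)
    (key : 3 ^ (p + q) < 3 * (a * b) ^ 3) : LeaderForm (a * b) (p + q) := by
  rcases ha.smooth_or_half with ⟨A, J, rfl, rfl⟩ | ha'
  · exact hb.two_pow_mul_three_pow_mul A J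
  rcases hb.smooth_or_half with ⟨A, J, rfl, rfl⟩ | hb'
  · rw [mul_comm, add_comm]
    exact ha.two_pow_mul_three_pow_mul A J
  · exact absurd key (not_lt.2 (three_mul_cube_le_of_half ha' hb'))

lemma leaderForm_two_pow_mul_three_pow_succ {A J : ℕ} (h9 : 9 ≤ 2 ^ A * 3 ^ J)
    (key : 3 ^ (2 * A + 3 * J) < (2 ^ A * 3 ^ J + 1) ^ 3) :
    LeaderForm (2 ^ A * 3 ^ J + 1) (2 * A + 3 * J + 1) := by
  match A, J with
  | 0, 0 | 0, 1 | 1, 0 | 1, 1 | 2, 0 => norm_num at h9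
  | 0, J + 2 => simpa using (Leader.three_pow_add_one (m := J + 2) (by omega)).leaderForm
  | 1, 2 => exact Leader.nineteen.leaderForm
  | 2, 1 => exact Leader.thirteen.leaderForm
  -- `2 * 3 ^ 3 + 1`, `4 * 3 ^ 2 + 1` and `2 ^ 3 + 1` already have defect `≥ 1`.
  | 1, J + 3 =>
    exact absurd key (not_three_pow_lt_succ_cube (x := 54) (k := 11) (by norm_num) 0 J
      (by ring) (by ring))
  | 2, J + 2 =>
    exact absurd key (not_three_pow_lt_succ_cube (x := 36) (k := 10) (by norm_num) 0 J
      (by ring) (by ring))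
  | A + 3, J =>
    exact absurd key (not_three_pow_lt_succ_cube (x := 8) (k := 6) (by norm_num) A J
      (by ring) (by ring))

lemma LeaderForm.succ {a p : ℕ} (h : LeaderForm a p) (ha : 9 ≤ a) (key : 3 ^ p < (a + 1) ^ 3) :
    LeaderForm (a + 1) (p + 1) := by
  rcases h.smooth_or_half with ⟨A, J, rfl, rfl⟩ | hhalf
  · exact leaderForm_two_pow_mul_three_pow_succ ha key
  · exact absurd key (not_lt.2 (succ_cube_le_of_half ha hhalf))

lemma leaderForm_of_le_nine {n k : ℕ} (hn : n ≤ 9) (hcube : n ^ 3 ≤ 3 ^ k)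
    (key : 3 ^ k < 3 * n ^ 3) : LeaderForm n k := by
  have hk : k < 7 := by
    by_contra! hk
    have := Nat.pow_le_pow_right (show 0 < 3 by norm_num) hk
    have := Nat.pow_le_pow_left hn 3
    omega
  interval_cases k <;> interval_cases n <;> first
    | exact LeaderForm.two_pow_mul_three_pow 0 0
    | exact LeaderForm.two_pow_mul_three_pow 1 0
    | exact LeaderForm.two_pow_mul_three_pow 0 1
    | exact LeaderForm.two_pow_mul_three_pow 2 0
    | exact LeaderForm.two_pow_mul_three_pow 1 1
    | exact LeaderForm.two_pow_mul_three_pow 3 0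
    | exact LeaderForm.two_pow_mul_three_pow 0 2
    | exact Leader.five.leaderForm
    | exact Leader.seven.leaderForm
    | (revert hcube key; norm_num)

lemma eq_one_of_three_pow_lt_add_cube {a b p q : ℕ} (hap : a ^ 3 ≤ 3 ^ p)
    (hbq : b ^ 3 ≤ 3 ^ q) (hb : 0 < b) (hq : 0 < q) (hqp : q ≤ p) (hab : 10 ≤ a + b)
    (key : 3 ^ (p + q) < 3 * (a + b) ^ 3) : b = 1 ∧ q = 1 := by
  have hq2 : q ≤ 2 := by
    by_contra! hq3
    have hbp : b ^ 3 ≤ 3 ^ p := hbq.trans (Nat.pow_le_pow_right (by norm_num) hqp)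
    have hsum : (a + b) ^ 3 ≤ 8 * 3 ^ p := by
      rcases le_total a b with h | h
      · calc (a + b) ^ 3 ≤ (2 * b) ^ 3 := by gcongr; omega
          _ ≤ 8 * 3 ^ p := by rw [mul_pow]; gcongr; norm_num
      · calc (a + b) ^ 3 ≤ (2 * a) ^ 3 := by gcongr; omega
          _ ≤ 8 * 3 ^ p := by rw [mul_pow]; gcongr; norm_num
    have := Nat.pow_le_pow_right (show 0 < 3 by norm_num) (show p + 3 ≤ p + q by omega)
    rw [pow_add] at this
    omega
  have hb2 : b ≤ 2 := by
    by_contra! hb3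
    have := Nat.pow_le_pow_left (show 3 ≤ b from hb3) 3
    have := Nat.pow_le_pow_right (show 0 < 3 by norm_num) hq2
    omega
  obtain rfl : q = 1 := by
    by_contra hq1
    obtain rfl : q = 2 := by omega
    have : (a + b) ^ 3 ≤ 3 * a ^ 3 := calc
      (a + b) ^ 3 ≤ (a + 2) ^ 3 := by gcongr
      _ ≤ 3 * a ^ 3 := by nlinarith [sq_nonneg a, show 8 ≤ a by omega]
    rw [pow_add] at key
    omega
  refine ⟨?_, rfl⟩
  by_contra hb1
  have := Nat.pow_le_pow_left (show 2 ≤ b by omega) 3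
  simp only [pow_one] at hbq
  omega

lemma leaderForm_add {a b p q : ℕ} (ha : Writes a p) (hb : Writes b q) (hqp : q ≤ p)
    (key : 3 ^ (p + q) < 3 * (a + b) ^ 3) (ih : 3 ^ p < 3 * a ^ 3 → LeaderForm a p) :
    LeaderForm (a + b) (p + q) := by
  rcases le_or_gt (a + b) 9 with hsmall | hbig
  · exact leaderForm_of_le_nine hsmall (ha.add hb).cube_le key
  obtain ⟨rfl, rfl⟩ :=
    eq_one_of_three_pow_lt_add_cube ha.cube_le hb.cube_le hb.pos.1 hb.pos.2 hqp hbig key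
  have key' : 3 ^ p < (a + 1) ^ 3 := by rw [pow_succ] at key; omega
  have := succ_cube_le_three_mul_cube (x := a) (by omega)
  exact (ih (by omega)).succ (by omega) key'

theorem Writes.leaderForm {n k : ℕ} (h : Writes n k) (key : 3 ^ k < 3 * n ^ 3) :
    LeaderForm n k := by
  induction h with
  | one => norm_num at key
  | @add a b p q ha hb iha ihb =>
    rcases le_total q p with hqp | hpq
    · exact leaderForm_add ha hb hqp key iha
    · rw [add_comm a, add_comm p] at key ⊢
      exact leaderForm_add hb ha hpq key ihb
  | @mul a b p q ha hb iha ihb =>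
    refine (iha (three_pow_lt_of_mul key hb.cube_le)).mul (ihb ?_) key
    rw [mul_comm a, add_comm p] at key
    exact three_pow_lt_of_mul key ha.cube_le

def LowDefectForm (n k : ℕ) : Prop :=
  (∃ j : ℕ, 1 ≤ j ∧ n = 3 ^ j ∧ k = 3 * j) ∨
  (∃ a j : ℕ, a ≤ 9 ∧ 1 ≤ a + j ∧ n = 2 ^ a * 3 ^ j ∧ k = 2 * a + 3 * j) ∨
  (∃ a j : ℕ, a ≤ 3 ∧ n = 5 * 2 ^ a * 3 ^ j ∧ k = 5 + 2 * a + 3 * j) ∨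
  (∃ a j : ℕ, a ≤ 2 ∧ n = 7 * 2 ^ a * 3 ^ j ∧ k = 6 + 2 * a + 3 * j) ∨
  (∃ j : ℕ, n = 19 * 3 ^ j ∧ k = 9 + 3 * j) ∨
  (∃ j : ℕ, n = 13 * 3 ^ j ∧ k = 8 + 3 * j) ∨
  (∃ m j : ℕ, 1 ≤ m ∧ n = (3 ^ m + 1) * 3 ^ j ∧ k = 1 + 3 * m + 3 * j)

lemma LowDefectForm.three_pow_lt {n k : ℕ} (h : LowDefectForm n k) : 3 ^ k < 3 * n ^ 3 := by
  rcases h with ⟨j, -, rfl, rfl⟩ | ⟨a, j, ha, -, rfl, rfl⟩ | ⟨a, j, ha, rfl, rfl⟩ |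
    ⟨a, j, ha, rfl, rfl⟩ | ⟨j, rfl, rfl⟩ | ⟨j, rfl, rfl⟩ | ⟨m, j, -, rfl, rfl⟩
  · simpa using three_pow_add_lt (x := 1) (k := 0) (by norm_num) j
  · exact three_pow_add_lt (by interval_cases a <;> norm_num) j
  · exact three_pow_add_lt (by interval_cases a <;> norm_num) j
  · exact three_pow_add_lt (by interval_cases a <;> norm_num) j
  · exact three_pow_add_lt (by norm_num) j
  · exact three_pow_add_lt (by norm_num) j
  · refine three_pow_add_lt ?_ j
    have : (3 ^ m) ^ 3 < (3 ^ m + 1) ^ 3 := Nat.pow_lt_pow_left (by omega) (by norm_num)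
    calc 3 ^ (1 + 3 * m) = 3 * (3 ^ m) ^ 3 := by ring
      _ < 3 * (3 ^ m + 1) ^ 3 := by omega

lemma lt_of_three_pow_lt {c κ A J A₀ : ℕ}
    (h₀ : 3 * (c * 2 ^ A₀) ^ 3 ≤ 3 ^ (κ + 2 * A₀))
    (key : 3 ^ (κ + 2 * A + 3 * J) < 3 * (c * 2 ^ A * 3 ^ J) ^ 3) : A < A₀ := by
  by_contra! hA
  obtain ⟨t, rfl⟩ := Nat.exists_eq_add_of_le hA
  have := mul_pow_le_pow_add (by norm_num) (by norm_num) h₀ t J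
  rw [show c * 2 ^ A₀ * 2 ^ t * 3 ^ J = c * 2 ^ (A₀ + t) * 3 ^ J by ring,
    show κ + 2 * A₀ + 2 * t + 3 * J = κ + 2 * (A₀ + t) + 3 * J by ring] at this
  omega

lemma LeaderForm.lowDefectForm {n k : ℕ} (h : LeaderForm n k) (key : 3 ^ k < 3 * n ^ 3)
    (hk : 0 < k) : LowDefectForm n k := by
  obtain ⟨c, κ, A, J, hc, rfl, rfl⟩ := h
  cases hc with
  | one =>
    have := lt_of_three_pow_lt (A₀ := 10) (by norm_num) key
    exact .inr <| .inl ⟨A, J, by omega, by omega, by ring, by ring⟩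
  | five =>
    have := lt_of_three_pow_lt (A₀ := 4) (by norm_num) key
    exact .inr <| .inr <| .inl ⟨A, J, by omega, rfl, rfl⟩
  | seven =>
    have := lt_of_three_pow_lt (A₀ := 3) (by norm_num) key
    exact .inr <| .inr <| .inr <| .inl ⟨A, J, by omega, rfl, rfl⟩
  | thirteen =>
    obtain rfl : A = 0 := Nat.lt_one_iff.1 (lt_of_three_pow_lt (by norm_num) key)
    exact .inr <| .inr <| .inr <| .inr <| .inr <| .inl ⟨J, by ring, by ring⟩
  | nineteen =>
    obtain rfl : A = 0 := Nat.lt_one_iff.1 (lt_of_three_pow_lt (by norm_num) key)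
    exact .inr <| .inr <| .inr <| .inr <| .inl ⟨J, by ring, by ring⟩
  | @three_pow_add_one m hm =>
    rcases hm.eq_or_lt with rfl | hm
    · -- `3 ^ 2 + 1 = 5 * 2`
      have := lt_of_three_pow_lt (A₀ := 3) (by norm_num) key
      exact .inr <| .inr <| .inl ⟨A + 1, J, by omega, by ring, by ring⟩
    · obtain rfl : A = 0 := Nat.lt_one_iff.1
        (lt_of_three_pow_lt (three_mul_cube_three_pow_add_one_mul_two_le hm) key)
      exact .inr <| .inr <| .inr <| .inr <| .inr <| .inr ⟨m, J, by omega, by ring, by ring⟩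

/-- Classification of the positive integers with defect less than 1, with their
complexities, and the fact that n = 1 is the only integer with defect exactly 1. -/
theorem classification_defect_lt_one :
    (∀ n : ℕ, 0 < n →
      (defect n < 1 ↔
        (∃ k : ℕ, 1 ≤ k ∧ n = 3 ^ k ∧ cpx n = 3 * k) ∨
        (∃ a k : ℕ, a ≤ 9 ∧ 1 ≤ a + k ∧ n = 2 ^ a * 3 ^ k ∧ cpx n = 2 * a + 3 * k) ∨
        (∃ a k : ℕ, a ≤ 3 ∧ n = 5 * 2 ^ a * 3 ^ k ∧ cpx n = 5 + 2 * a + 3 * k) ∨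
        (∃ a k : ℕ, a ≤ 2 ∧ n = 7 * 2 ^ a * 3 ^ k ∧ cpx n = 6 + 2 * a + 3 * k) ∨
        (∃ k : ℕ, n = 19 * 3 ^ k ∧ cpx n = 9 + 3 * k) ∨
        (∃ k : ℕ, n = 13 * 3 ^ k ∧ cpx n = 8 + 3 * k) ∨
        (∃ m k : ℕ, 1 ≤ m ∧ n = (3 ^ m + 1) * 3 ^ k ∧ cpx n = 1 + 3 * m + 3 * k))) ∧
    (∀ n : ℕ, 0 < n → (defect n = 1 ↔ n = 1)) := by
  refine ⟨fun n hn => ?_, fun n hn => ?_⟩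
  · have hw := writes_cpx hn
    rw [defect_lt_one_iff hn]
    exact ⟨fun key => (hw.leaderForm key).lowDefectForm key hw.pos.2,
      LowDefectForm.three_pow_lt⟩
  · rw [defect_eq_one_iff hn]
    refine ⟨eq_one_of_three_pow_cpx_eq hn, ?_⟩
    rintro rfl
    simp [cpx_one]
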